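/- Let Ψ be a vector in the bipartite Hilbert space H = EuclideanSpace ℂ (Fin m × Fin n) and let a ∈ EuclideanSpace ℂ (Fin m) be a unit vector. Define φ ∈ EuclideanSpace ℂ (Fin n) by φ k = ⟨a⊗e_k, Ψ⟩. Then: (i) for every unit vector b ∈ EuclideanSpace ℂ (Fin n), |⟨a⊗b, Ψ⟩| ≤ ‖φ‖; (ii) if φ ≠ 0, the bound is attained at b = ‖φ‖⁻¹ • φ; and (iii) ‖φ‖² = Σ_{k ∈ Fin n} |⟨a⊗e_k, Ψ⟩|². (The backward-iteration step: the optimal second component is proportional to the contraction ⟨a, ·|Ψ⟩.) -/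

import Mathlib

/-! `b ↦ ⟪a ⊗ b, Ψ⟫` is the functional `b ↦ ⟪b, ⟨a|Ψ⟩⟫` for the partial inner product
`⟨a|Ψ⟩ k = ∑ i, conj (a i) * Ψ (i, k)`, and `φ` is exactly this vector. Hence (i) is
Cauchy–Schwarz, (ii) its equality case at the normalised vector, and (iii) Parseval. -/

open scoped ComplexInnerProductSpace

/-- The product vector `a ⊗ b` in the bipartite space, `(a ⊗ b)(i, k) = a i * b k`. -/
noncomputable def tp {m n : ℕ} (a : EuclideanSpace ℂ (Fin m)) (b : EuclideanSpace ℂ (Fin n)) :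
    EuclideanSpace ℂ (Fin m × Fin n) :=
  WithLp.toLp 2 (fun p : Fin m × Fin n => a p.1 * b p.2)

noncomputable def partialInner {m n : ℕ} (a : EuclideanSpace ℂ (Fin m))
    (Ψ : EuclideanSpace ℂ (Fin m × Fin n)) : EuclideanSpace ℂ (Fin n) :=
  WithLp.toLp 2 fun k => ∑ i, starRingEnd ℂ (a i) * Ψ (i, k)

theorem inner_tp_eq_inner_partialInner {m n : ℕ} (a : EuclideanSpace ℂ (Fin m))
    (b : EuclideanSpace ℂ (Fin n)) (Ψ : EuclideanSpace ℂ (Fin m × Fin n)) :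
    ⟪tp a b, Ψ⟫ = ⟪b, partialInner a Ψ⟫ := by
  simp only [PiLp.inner_apply, tp, partialInner, RCLike.inner_apply, Fintype.sum_prod_type,
    Finset.sum_mul, map_mul]
  rw [Finset.sum_comm]
  refine Finset.sum_congr rfl fun k _ => Finset.sum_congr rfl fun i _ => ?_
  ring

theorem inner_tp_single {m n : ℕ} (a : EuclideanSpace ℂ (Fin m))
    (Ψ : EuclideanSpace ℂ (Fin m × Fin n)) (k : Fin n) :
    ⟪tp a (EuclideanSpace.single k 1), Ψ⟫ = partialInner a Ψ k := by
  rw [inner_tp_eq_inner_partialInner, EuclideanSpace.inner_single_left, map_one, one_mul]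

theorem norm_inner_inv_norm_smul_self {𝕜 E : Type*} [RCLike 𝕜] [SeminormedAddCommGroup E]
    [InnerProductSpace 𝕜 E] (x : E) : ‖inner 𝕜 (((‖x‖⁻¹ : ℝ) : 𝕜) • x) x‖ = ‖x‖ := by
  rw [inner_smul_real_left, norm_smul, inner_self_eq_norm_sq_to_K, norm_pow, RCLike.norm_ofReal,
    Real.norm_eq_abs, abs_inv, abs_norm, sq, ← mul_assoc, inv_mul_mul_self]

theorem backward_step_general {m n : ℕ}
    (Ψ : EuclideanSpace ℂ (Fin m × Fin n))
    (a : EuclideanSpace ℂ (Fin m))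
    (φ : EuclideanSpace ℂ (Fin n))
    (hφ : ∀ k : Fin n, φ k = ⟪tp a (EuclideanSpace.single k 1), Ψ⟫) :
    (∀ b : EuclideanSpace ℂ (Fin n), ‖b‖ = 1 → ‖⟪tp a b, Ψ⟫‖ ≤ ‖φ‖) ∧
    (φ ≠ 0 → ‖⟪tp a ((‖φ‖ : ℝ)⁻¹ • φ), Ψ⟫‖ = ‖φ‖) ∧
    ‖φ‖ ^ 2 = ∑ k : Fin n, ‖⟪tp a (EuclideanSpace.single k 1), Ψ⟫‖ ^ 2 := by
  have hφ_eq : φ = partialInner a Ψ := by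
    ext k
    rw [hφ, inner_tp_single]
  refine ⟨fun b hb => ?_, fun _ => ?_, ?_⟩
  · calc ‖⟪tp a b, Ψ⟫‖ = ‖⟪b, φ⟫‖ := by rw [inner_tp_eq_inner_partialInner, hφ_eq]
      _ ≤ ‖b‖ * ‖φ‖ := norm_inner_le_norm b φ
      _ = ‖φ‖ := by rw [hb, one_mul]
  · rw [inner_tp_eq_inner_partialInner, ← hφ_eq, RCLike.real_smul_eq_coe_smul (K := ℂ),
      norm_inner_inv_norm_smul_self]
  · simp only [← hφ, EuclideanSpace.norm_sq_eq]

/-- **Backward-iteration step.**  For `Ψ` in the bipartite space and a unit vector `a`,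
let `φ k = ⟨a⊗e_k, Ψ⟩` be the contraction `⟨a, ⋅|Ψ⟩`.  Then (i) for every unit vector `b`,
`|⟨a⊗b, Ψ⟩| ≤ ‖φ‖`; (ii) if `φ ≠ 0` the bound is attained at `b = ‖φ‖⁻¹ • φ`; and
(iii) `‖φ‖² = Σ_k |⟨a⊗e_k, Ψ⟩|²`. -/
theorem backward_step {m n : ℕ} (hm : 1 ≤ m) (hn : 1 ≤ n)
    (Ψ : EuclideanSpace ℂ (Fin m × Fin n))
    (a : EuclideanSpace ℂ (Fin m)) (ha : ‖a‖ = 1)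
    (φ : EuclideanSpace ℂ (Fin n))
    (hφ : ∀ k : Fin n, φ k = ⟪tp a (EuclideanSpace.single k 1), Ψ⟫) :
    (∀ b : EuclideanSpace ℂ (Fin n), ‖b‖ = 1 → ‖⟪tp a b, Ψ⟫‖ ≤ ‖φ‖) ∧
    (φ ≠ 0 → ‖⟪tp a ((‖φ‖ : ℝ)⁻¹ • φ), Ψ⟫‖ = ‖φ‖) ∧
    ‖φ‖ ^ 2 = ∑ k : Fin n, ‖⟪tp a (EuclideanSpace.single k 1), Ψ⟫‖ ^ 2 :=
  backward_step_general Ψ a φ hφ
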